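/- Let B be a mutation-acyclic real skew-symmetric 3×3 matrix with 0 < C(B) < 4. Then there exists a finite sequence of mutation indices k_1, …, k_m with m ≤ ⌊π / arcsin(√(4 − C(B))/2)⌋ such that the matrix μ_{k_m}(⋯(μ_{k_1}(B))⋯) is acyclic. -/

import Mathlib

open Matrix
noncomputable section

/-- Mutation of a real `3 × 3` matrix in direction `k`. -/
def mutate (k : Fin 3) (B : Matrix (Fin 3) (Fin 3) ℝ) : Matrix (Fin 3) (Fin 3) ℝ :=
  Matrix.of fun i j =>
    if i = k ∨ j = k then -B i j
    else B i j + (|B i k| * B k j + B i k * |B k j|) / 2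

/-- One step of mutation equivalence: a single mutation, or a simultaneous
permutation of the index set. -/
def MutationStep (B B' : Matrix (Fin 3) (Fin 3) ℝ) : Prop :=
  (∃ k : Fin 3, B' = mutate k B) ∨
  (∃ σ : Equiv.Perm (Fin 3), B' = Matrix.of fun i j => B (σ i) (σ j))

/-- Mutation equivalence: a finite sequence of mutations and simultaneous permutations. -/
def MutationEquiv : Matrix (Fin 3) (Fin 3) ℝ → Matrix (Fin 3) (Fin 3) ℝ → Prop :=
  Relation.ReflTransGen MutationStep

/-- `B` is cyclic if `b₁₂, b₂₃, b₃₁` are all nonzero and of the same sign. -/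
def IsCyclicMat (B : Matrix (Fin 3) (Fin 3) ℝ) : Prop :=
  (0 < B 0 1 ∧ 0 < B 1 2 ∧ 0 < B 2 0) ∨ (B 0 1 < 0 ∧ B 1 2 < 0 ∧ B 2 0 < 0)

instance : DecidablePred IsCyclicMat := fun B => by
  unfold IsCyclicMat; exact inferInstance

/-- `B` is mutation-cyclic if every matrix in its mutation class is cyclic. -/
def IsMutationCyclic (B : Matrix (Fin 3) (Fin 3) ℝ) : Prop :=
  ∀ B', MutationEquiv B B' → IsCyclicMat B'

/-- `B` is mutation-acyclic if some matrix in its mutation class is acyclic. -/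
def IsMutationAcyclic (B : Matrix (Fin 3) (Fin 3) ℝ) : Prop :=
  ∃ B', MutationEquiv B B' ∧ ¬ IsCyclicMat B'

/-- The Markov constant `C(B)`. -/
def markov (B : Matrix (Fin 3) (Fin 3) ℝ) : ℝ :=
  (B 0 1) ^ 2 + (B 1 2) ^ 2 + (B 2 0) ^ 2 -
    (if IsCyclicMat B then 1 else -1) * |B 0 1 * B 1 2 * B 2 0|

/-- The Lorentzian symmetric bilinear form on `ℝ^{2,1}`. -/
def lform (x y : Fin 3 → ℝ) : ℝ := x 0 * y 0 + x 1 * y 1 - x 2 * y 2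

/-- A realization of `B` by reflections: a triple of vectors of square norm `2`
whose pairwise inner products have the absolute values `|b_ij|`, with the parity
condition on the number of positive inner products. -/
def ReflRealization {V : Type*} [AddCommGroup V] [Module ℝ V]
    (f : V →ₗ[ℝ] V →ₗ[ℝ] ℝ) (B : Matrix (Fin 3) (Fin 3) ℝ) (v : Fin 3 → V) : Prop :=
  (∀ i, f (v i) (v i) = 2) ∧
  (∀ i j, i ≠ j → |f (v i) (v j)| = |B i j|) ∧
  ((∀ i j, i ≠ j → f (v i) (v j) ≠ 0) →
    (Finset.univ.filter
        (fun p : Fin 3 × Fin 3 => p.1 < p.2 ∧ 0 < f (v p.1) (v p.2))).card % 2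
      = if IsCyclicMat B then 1 else 0)

/-- Mutation of a triple of vectors by partial reflections. -/
def mutateVecRefl {V : Type*} [AddCommGroup V] [Module ℝ V]
    (f : V →ₗ[ℝ] V →ₗ[ℝ] ℝ) (B : Matrix (Fin 3) (Fin 3) ℝ) (k : Fin 3) (v : Fin 3 → V) :
    Fin 3 → V :=
  fun j =>
    if j = k then -v k
    else if 0 < B j k then v j - f (v j) (v k) • v k
    else v j

/-- A realization of `B` by `π`-rotations: a triple of vectors in `ℝ^{2,1}` of square
norm `-2` with pairwise inner products `-|b₁₂|, -|b₂₃|, -|b₃₁|`. -/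
def RotRealization (B : Matrix (Fin 3) (Fin 3) ℝ) (v : Fin 3 → (Fin 3 → ℝ)) : Prop :=
  (∀ i, lform (v i) (v i) = -2) ∧
  lform (v 0) (v 1) = -|B 0 1| ∧ lform (v 1) (v 2) = -|B 1 2| ∧
  lform (v 2) (v 0) = -|B 2 0|

/-- Mutation of a triple of points by partial `π`-rotations. -/
def mutateVecRot (B : Matrix (Fin 3) (Fin 3) ℝ) (k : Fin 3) (v : Fin 3 → (Fin 3 → ℝ)) :
    Fin 3 → (Fin 3 → ℝ) :=
  fun j => if 0 < B j k then -v j - lform (v j) (v k) • v k else v j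

/-!
Mutation commutes with negation and with relabelling the indices, so we may assume that `B` is
cyclic with positive entries `a, b, c`; then `C(B) = a² + b² + c² - abc`.

If `a, b, c ≥ 2`, every mutation acts on the triple by a Vieta jump such as `c ↦ ab - c`, which
keeps all entries `≥ 2` (because `C < 4`), so the whole mutation class is cyclic.

Otherwise some entry, say `a = 2 cos φ`, is `< 2`. Mutating alternately at the two ends of that
arrow replaces the other two entries by consecutive terms of `y (n + 2) = a y (n + 1) - y n`,
and `y n * sin φ = y 1 * sin (n φ) - y 0 * sin ((n - 1) φ)`, so some `y (m + 1) ≤ 0`, which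
makes the matrix acyclic, with `m ≤ ⌊π / φ⌋`. Finally `C ≥ a²`, i.e.
`φ ≥ arcsin (√(4 - C) / 2)`.
-/

open Real

def skew3 (a b c : ℝ) : Matrix (Fin 3) (Fin 3) ℝ := !![0, a, -c; -a, 0, b; c, -b, 0]

theorem eq_skew3_of_transpose_eq_neg {B : Matrix (Fin 3) (Fin 3) ℝ} (hB : Bᵀ = -B) :
    B = skew3 (B 0 1) (B 1 2) (B 2 0) := by
  have h : ∀ i j, B j i = -B i j := fun i j => congrFun (congrFun hB i) j
  ext i j
  fin_cases i <;> fin_cases j <;> simp [skew3, h 0 1, h 1 2, h 2 0] <;>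
    linarith [h 0 0, h 1 1, h 2 2]

theorem neg_skew3 (a b c : ℝ) : -skew3 a b c = skew3 (-a) (-b) (-c) := by
  ext i j; fin_cases i <;> fin_cases j <;> simp [skew3]

theorem isCyclicMat_skew3 (a b c : ℝ) :
    IsCyclicMat (skew3 a b c) ↔ (0 < a ∧ 0 < b ∧ 0 < c) ∨ (a < 0 ∧ b < 0 ∧ c < 0) :=
  Iff.rfl

theorem skew3_submatrix_finRotate (a b c : ℝ) :
    (skew3 a b c).submatrix (finRotate 3) (finRotate 3) = skew3 b c a := by
  ext i j; fin_cases i <;> fin_cases j <;> rfl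

theorem skew3_submatrix (a b c : ℝ) (σ : Equiv.Perm (Fin 3)) :
    let M := (skew3 a b c).submatrix σ σ
    M = skew3 a b c ∨ M = skew3 b c a ∨ M = skew3 c a b ∨
      M = -skew3 a c b ∨ M = -skew3 c b a ∨ M = -skew3 b a c := by
  have : ∀ σ : Equiv.Perm (Fin 3), σ = 1 ∨ σ = finRotate 3 ∨ σ = finRotate 3 * finRotate 3 ∨
      σ = Equiv.swap 0 1 ∨ σ = Equiv.swap 1 2 ∨ σ = Equiv.swap 0 2 := by decide
  rcases this σ with rfl | rfl | rfl | rfl | rfl | rfl <;>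
    simp only [neg_skew3] <;>
    [left; (right; left); (right; right; left); (right; right; right; left);
      (right; right; right; right; left); (right; right; right; right; right)] <;>
    ext i j <;> fin_cases i <;> fin_cases j <;> simp [skew3, Equiv.swap_apply_of_ne_of_ne]

theorem isCyclicMat_neg (B : Matrix (Fin 3) (Fin 3) ℝ) : IsCyclicMat (-B) ↔ IsCyclicMat B := by
  simp only [IsCyclicMat, Matrix.neg_apply, neg_pos, neg_lt_zero]
  tauto

theorem isCyclicMat_submatrix_finRotate (B : Matrix (Fin 3) (Fin 3) ℝ) :
    IsCyclicMat (B.submatrix (finRotate 3) (finRotate 3)) ↔ IsCyclicMat B := by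
  change (0 < B 1 2 ∧ 0 < B 2 0 ∧ 0 < B 0 1) ∨ (B 1 2 < 0 ∧ B 2 0 < 0 ∧ B 0 1 < 0) ↔ _
  unfold IsCyclicMat
  tauto

theorem markov_neg (B : Matrix (Fin 3) (Fin 3) ℝ) : markov (-B) = markov B := by
  simp [markov, isCyclicMat_neg, abs_mul]

theorem markov_skew3_of_pos {a b c : ℝ} (ha : 0 < a) (hb : 0 < b) (hc : 0 < c) :
    markov (skew3 a b c) = a ^ 2 + b ^ 2 + c ^ 2 - a * b * c := by
  have hcyc : IsCyclicMat (skew3 a b c) := (isCyclicMat_skew3 a b c).2 (Or.inl ⟨ha, hb, hc⟩)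
  change a ^ 2 + b ^ 2 + c ^ 2 - (if IsCyclicMat (skew3 a b c) then 1 else -1) * |a * b * c| = _
  rw [if_pos hcyc, one_mul, abs_of_pos (by positivity)]

theorem mutate_neg (k : Fin 3) (B : Matrix (Fin 3) (Fin 3) ℝ) :
    mutate k (-B) = -mutate k B := by
  ext i j
  by_cases h : i = k ∨ j = k
  · simp [mutate, h]
  · simp only [mutate, Matrix.of_apply, Matrix.neg_apply, h, if_false, abs_neg]
    ring

theorem mutate_submatrix (σ : Equiv.Perm (Fin 3)) (k : Fin 3) (B : Matrix (Fin 3) (Fin 3) ℝ) :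
    mutate k (B.submatrix σ σ) = (mutate (σ k) B).submatrix σ σ := by
  ext i j
  simp [mutate, σ.injective.eq_iff]

theorem foldl_mutate_neg (ks : List (Fin 3)) (B : Matrix (Fin 3) (Fin 3) ℝ) :
    ks.foldl (fun M k => mutate k M) (-B) = -ks.foldl (fun M k => mutate k M) B := by
  induction ks generalizing B with
  | nil => rfl
  | cons k ks ih => simp only [List.foldl_cons, mutate_neg, ih]

theorem foldl_mutate_submatrix (σ : Equiv.Perm (Fin 3)) (ks : List (Fin 3))
    (B : Matrix (Fin 3) (Fin 3) ℝ) :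
    ks.foldl (fun M k => mutate k M) (B.submatrix σ σ) =
      ((ks.map σ).foldl (fun M k => mutate k M) B).submatrix σ σ := by
  induction ks generalizing B with
  | nil => rfl
  | cons k ks ih => simp only [List.foldl_cons, List.map_cons, mutate_submatrix, ih]

theorem mutate_zero_skew3 {a c : ℝ} (b : ℝ) (ha : 0 ≤ a) (hc : 0 ≤ c) :
    mutate 0 (skew3 a b c) = -skew3 a (a * c - b) c := by
  ext i j; fin_cases i <;> fin_cases j <;> simp [mutate, skew3, abs_of_nonneg, ha, hc] <;> ring

theorem mutate_one_skew3 {a b : ℝ} (c : ℝ) (ha : 0 ≤ a) (hb : 0 ≤ b) :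
    mutate 1 (skew3 a b c) = -skew3 a b (a * b - c) := by
  ext i j; fin_cases i <;> fin_cases j <;> simp [mutate, skew3, abs_of_nonneg, ha, hb] <;> ring

theorem mutate_two_skew3 {b c : ℝ} (a : ℝ) (hb : 0 ≤ b) (hc : 0 ≤ c) :
    mutate 2 (skew3 a b c) = -skew3 (b * c - a) b c := by
  ext i j; fin_cases i <;> fin_cases j <;> simp [mutate, skew3, abs_of_nonneg, hb, hc] <;> ring

def AcyclicWithin (n : ℕ) (B : Matrix (Fin 3) (Fin 3) ℝ) : Prop :=
  ∃ ks : List (Fin 3), ks.length ≤ n ∧ ¬ IsCyclicMat (ks.foldl (fun M k => mutate k M) B)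

theorem AcyclicWithin.mono {m n : ℕ} {B : Matrix (Fin 3) (Fin 3) ℝ} (h : AcyclicWithin m B)
    (hmn : m ≤ n) : AcyclicWithin n B :=
  let ⟨ks, hks, hacyc⟩ := h
  ⟨ks, hks.trans hmn, hacyc⟩

theorem AcyclicWithin.of_neg {n : ℕ} {B : Matrix (Fin 3) (Fin 3) ℝ} (h : AcyclicWithin n (-B)) :
    AcyclicWithin n B :=
  let ⟨ks, hks, hacyc⟩ := h
  ⟨ks, hks, by rwa [foldl_mutate_neg, isCyclicMat_neg] at hacyc⟩

theorem AcyclicWithin.of_submatrix_finRotate {n : ℕ} {B : Matrix (Fin 3) (Fin 3) ℝ}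
    (h : AcyclicWithin n (B.submatrix (finRotate 3) (finRotate 3))) : AcyclicWithin n B :=
  let ⟨ks, hks, hacyc⟩ := h
  ⟨ks.map (finRotate 3), by rwa [List.length_map],
    by rwa [foldl_mutate_submatrix, isCyclicMat_submatrix_finRotate] at hacyc⟩

theorem AcyclicWithin.of_skew3_rotate {n : ℕ} {a b c : ℝ} (h : AcyclicWithin n (skew3 b c a)) :
    AcyclicWithin n (skew3 a b c) :=
  .of_submatrix_finRotate (by rwa [skew3_submatrix_finRotate])

def chebyshevSeq (d y₀ y₁ : ℝ) : ℕ → ℝ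
  | 0 => y₀
  | 1 => y₁
  | n + 2 => d * chebyshevSeq d y₀ y₁ (n + 1) - chebyshevSeq d y₀ y₁ n

theorem chebyshevSeq_mul_sin (φ y₀ y₁ : ℝ) (n : ℕ) :
    chebyshevSeq (2 * cos φ) y₀ y₁ n * sin φ = y₁ * sin (n * φ) - y₀ * sin ((n - 1) * φ) := by
  have sin_add_sin (x : ℝ) : sin (x + φ) = 2 * cos φ * sin x - sin (x - φ) := by
    rw [sin_add, sin_sub]; ring
  induction n using Nat.twoStepInduction with
  | zero => simp [chebyshevSeq]
  | one => simp [chebyshevSeq]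
  | more n ih₀ ih₁ =>
    rw [chebyshevSeq, sub_mul, mul_assoc, ih₀, ih₁]
    push_cast
    rw [add_sub_cancel_right, show ((n : ℝ) + 2) * φ = (n + 1) * φ + φ by ring, sin_add_sin,
      show ((n : ℝ) + 2 - 1) * φ = n * φ + φ by ring, sin_add_sin,
      show ((n : ℝ) + 1) * φ - φ = n * φ by ring, show (n : ℝ) * φ - φ = (n - 1) * φ by ring]
    ring

theorem chebyshevSeq_floor_add_one_nonpos {φ y₀ y₁ : ℝ} (hφ : 0 < φ) (hφπ : φ < π)
    (h₀ : 0 ≤ y₀) (h₁ : 0 ≤ y₁) : chebyshevSeq (2 * cos φ) y₀ y₁ (⌊π / φ⌋₊ + 1) ≤ 0 := by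
  set n := ⌊π / φ⌋₊
  have hn : n * φ ≤ π := (le_div_iff₀ hφ).1 (Nat.floor_le (by positivity))
  have hn' : π < (n + 1) * φ := (div_lt_iff₀ hφ).1 (Nat.lt_floor_add_one _)
  have hsin_n : 0 ≤ sin (n * φ) := sin_nonneg_of_nonneg_of_le_pi (by positivity) hn
  have hsin_n' : sin ((n + 1) * φ) ≤ 0 := by
    rw [← sin_sub_two_pi]
    exact sin_nonpos_of_nonpos_of_neg_pi_le (by linarith) (by linarith)
  have key := chebyshevSeq_mul_sin φ y₀ y₁ (n + 1)
  push_cast at key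
  rw [add_sub_cancel_right] at key
  have hprod : chebyshevSeq (2 * cos φ) y₀ y₁ (n + 1) * sin φ ≤ 0 := by
    rw [key]
    linarith [mul_nonneg h₀ hsin_n, mul_nonpos_of_nonneg_of_nonpos h₁ hsin_n']
  exact nonpos_of_mul_nonpos_left hprod (sin_pos_of_pos_of_lt_pi hφ hφπ)

def alternatingMutations (m : ℕ) : List (Fin 3) :=
  (List.range m).map fun i => if Even i then 0 else 1

theorem foldl_mutate_alternatingMutations {a : ℝ} (b c : ℝ) (ha : 0 ≤ a) (m : ℕ)
    (hy : ∀ j ≤ m, 0 ≤ chebyshevSeq a b c j) :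
    (alternatingMutations m).foldl (fun M k => mutate k M) (skew3 a b c) =
      if Even m then skew3 a (chebyshevSeq a b c m) (chebyshevSeq a b c (m + 1))
      else -skew3 a (chebyshevSeq a b c (m + 1)) (chebyshevSeq a b c m) := by
  induction m with
  | zero => simp [alternatingMutations, chebyshevSeq]
  | succ m ih =>
    have hm : 0 ≤ chebyshevSeq a b c (m + 1) := hy (m + 1) le_rfl
    rw [alternatingMutations, List.range_succ, List.map_append, List.foldl_append,
      ← alternatingMutations, ih fun j hj => hy j (by omega)]
    rcases Nat.even_or_odd m with hev | hodd
    · simp only [hev, if_true, Nat.not_even_iff_odd.2 hev.add_one, if_false, List.map_cons,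
        List.map_nil, List.foldl_cons, List.foldl_nil, mutate_zero_skew3 _ ha hm]
      rfl
    · simp only [Nat.not_even_iff_odd.2 hodd, if_false, hodd.add_one, if_true, List.map_cons,
        List.map_nil, List.foldl_cons, List.foldl_nil, mutate_neg, mutate_one_skew3 _ ha hm, neg_neg]
      rfl

theorem acyclicWithin_alternatingMutations {a b c : ℝ} (ha : 0 < a) (ha2 : a < 2) (hb : 0 < b)
    (hc : 0 < c) : AcyclicWithin ⌊π / arccos (a / 2)⌋₊ (skew3 a b c) := by
  set φ := arccos (a / 2)
  have hφ : 0 < φ := arccos_pos.2 (by linarith)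
  have hφπ : φ < π := (arccos_lt_pi_div_two.2 (by linarith)).trans (by linarith [pi_pos])
  have hcos : 2 * cos φ = a := by rw [cos_arccos (by linarith) (by linarith)]; ring
  have hnonpos : chebyshevSeq a b c (⌊π / φ⌋₊ + 1) ≤ 0 :=
    hcos ▸ chebyshevSeq_floor_add_one_nonpos hφ hφπ hb.le hc.le
  have hex : ∃ k, chebyshevSeq a b c (k + 1) ≤ 0 := ⟨_, hnonpos⟩
  set m := Nat.find hex
  have hpos : ∀ j ≤ m, 0 < chebyshevSeq a b c j
    | 0, _ => hb
    | j + 1, hj => lt_of_not_ge (Nat.find_min hex (by omega))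
  refine ⟨alternatingMutations m, ?_, ?_⟩
  · rw [alternatingMutations, List.length_map, List.length_range]
    exact Nat.find_min' hex hnonpos
  · have hlast : chebyshevSeq a b c (m + 1) ≤ 0 := Nat.find_spec hex
    rw [foldl_mutate_alternatingMutations b c ha.le m fun j hj => (hpos j hj).le]
    split_ifs
    · rw [isCyclicMat_skew3]
      rintro (⟨-, -, h⟩ | ⟨h, -, -⟩) <;> linarith
    · rw [isCyclicMat_neg, isCyclicMat_skew3]
      rintro (⟨-, h, -⟩ | ⟨h, -, -⟩) <;> linarith

theorem floor_pi_div_arccos_le {a C : ℝ} (ha : 0 ≤ a) (haC : a ^ 2 ≤ C) (hC : C < 4) :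
    ⌊π / arccos (a / 2)⌋₊ ≤ ⌊π / arcsin (√(4 - C) / 2)⌋₊ := by
  have hθ : 0 < arcsin (√(4 - C) / 2) :=
    arcsin_pos.2 (div_pos (sqrt_pos.2 (sub_pos.2 hC)) two_pos)
  have hθφ : arcsin (√(4 - C) / 2) ≤ arccos (a / 2) := by
    rw [arccos_eq_arcsin (by positivity)]
    refine arcsin_le_arcsin ?_
    rw [show 1 - (a / 2) ^ 2 = (4 - a ^ 2) / 2 ^ 2 by ring, sqrt_div' _ (by norm_num),
      sqrt_sq (by norm_num)]
    gcongr
  exact Nat.floor_mono (div_le_div_of_nonneg_left pi_pos.le hθ hθφ)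

theorem acyclicWithin_of_lt_two {a b c C : ℝ} (ha : 0 < a) (ha2 : a < 2) (hb : 0 < b)
    (hc : 0 < c) (hC : C = a ^ 2 + b ^ 2 + c ^ 2 - a * b * c) (hC4 : C < 4) :
    AcyclicWithin ⌊π / arcsin (√(4 - C) / 2)⌋₊ (skew3 a b c) := by
  have haC : a ^ 2 ≤ C := by nlinarith [sq_nonneg (b - c), mul_pos hb hc]
  exact (acyclicWithin_alternatingMutations ha ha2 hb hc).mono
    (floor_pi_div_arccos_le ha.le haC hC4)

def BigTriple (a b c : ℝ) : Prop :=
  2 ≤ a ∧ 2 ≤ b ∧ 2 ≤ c ∧ a ^ 2 + b ^ 2 + c ^ 2 - a * b * c < 4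

namespace BigTriple

variable {a b c : ℝ}

theorem rotate (h : BigTriple a b c) : BigTriple b c a := by
  obtain ⟨ha, hb, hc, hC⟩ := h
  exact ⟨hb, hc, ha, by linarith⟩

theorem swap (h : BigTriple a b c) : BigTriple b a c := by
  obtain ⟨ha, hb, hc, hC⟩ := h
  exact ⟨hb, ha, hc, by linarith⟩

/-- The Vieta jump `c ↦ ab - c` keeps the entries `≥ 2`: otherwise
`(c - 2)(2 - (ab - c)) ≥ 0` together with `C < 4` would force `(a - b)² < 0`. -/
theorem vieta (h : BigTriple a b c) : BigTriple a b (a * b - c) := by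
  obtain ⟨ha, hb, hc, hC⟩ := h
  have hjump : 2 ≤ a * b - c := by
    by_contra! hlt
    nlinarith [sq_nonneg (a - b), mul_nonneg (sub_nonneg.2 hc) (sub_nonneg.2 hlt.le)]
  exact ⟨ha, hb, hjump, by linarith⟩

end BigTriple

/-- A mutation-closed class of cyclic matrices: mutation acts on the triple by a Vieta jump. -/
def IsBigCyclic (B : Matrix (Fin 3) (Fin 3) ℝ) : Prop :=
  ∃ a b c, BigTriple a b c ∧ (B = skew3 a b c ∨ B = -skew3 a b c)

namespace IsBigCyclic

theorem neg {B : Matrix (Fin 3) (Fin 3) ℝ} (h : IsBigCyclic B) : IsBigCyclic (-B) := by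
  obtain ⟨a, b, c, habc, rfl | rfl⟩ := h
  exacts [⟨a, b, c, habc, Or.inr rfl⟩, ⟨a, b, c, habc, Or.inl (neg_neg _)⟩]

theorem isCyclicMat {B : Matrix (Fin 3) (Fin 3) ℝ} (h : IsBigCyclic B) : IsCyclicMat B := by
  obtain ⟨a, b, c, ⟨ha, hb, hc, -⟩, rfl | rfl⟩ := h
  · exact (isCyclicMat_skew3 a b c).2 (Or.inl ⟨by linarith, by linarith, by linarith⟩)
  · rw [isCyclicMat_neg, isCyclicMat_skew3]
    exact Or.inl ⟨by linarith, by linarith, by linarith⟩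

theorem mutate_skew3 {a b c : ℝ} (h : BigTriple a b c) (k : Fin 3) :
    IsBigCyclic (mutate k (skew3 a b c)) := by
  have ⟨ha, hb, hc, _⟩ := h
  fin_cases k
  · refine ⟨a, a * c - b, c, ?_, Or.inr (mutate_zero_skew3 b (by linarith) (by linarith))⟩
    simpa only [mul_comm c a] using h.rotate.rotate.vieta.rotate
  · exact ⟨a, b, a * b - c, h.vieta, Or.inr (mutate_one_skew3 c (by linarith) (by linarith))⟩
  · exact ⟨b * c - a, b, c, h.rotate.vieta.rotate.rotate,
      Or.inr (mutate_two_skew3 a (by linarith) (by linarith))⟩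

theorem mutate {B : Matrix (Fin 3) (Fin 3) ℝ} (h : IsBigCyclic B) (k : Fin 3) :
    IsBigCyclic (mutate k B) := by
  obtain ⟨a, b, c, habc, rfl | rfl⟩ := h
  · exact mutate_skew3 habc k
  · rw [mutate_neg]
    exact (mutate_skew3 habc k).neg

theorem submatrix_skew3 {a b c : ℝ} (h : BigTriple a b c) (σ : Equiv.Perm (Fin 3)) :
    IsBigCyclic ((skew3 a b c).submatrix σ σ) := by
  rcases skew3_submatrix a b c σ with e | e | e | e | e | e <;> rw [e]
  · exact ⟨a, b, c, h, Or.inl rfl⟩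
  · exact ⟨b, c, a, h.rotate, Or.inl rfl⟩
  · exact ⟨c, a, b, h.rotate.rotate, Or.inl rfl⟩
  · exact ⟨a, c, b, h.rotate.rotate.swap, Or.inr rfl⟩
  · exact ⟨c, b, a, h.rotate.swap, Or.inr rfl⟩
  · exact ⟨b, a, c, h.swap, Or.inr rfl⟩

theorem submatrix {B : Matrix (Fin 3) (Fin 3) ℝ} (h : IsBigCyclic B) (σ : Equiv.Perm (Fin 3)) :
    IsBigCyclic (B.submatrix σ σ) := by
  obtain ⟨a, b, c, habc, rfl | rfl⟩ := h
  · exact submatrix_skew3 habc σ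
  · exact (submatrix_skew3 habc σ).neg

theorem mutationStep {B B' : Matrix (Fin 3) (Fin 3) ℝ} (h : IsBigCyclic B)
    (hstep : MutationStep B B') : IsBigCyclic B' := by
  rcases hstep with ⟨k, rfl⟩ | ⟨σ, rfl⟩
  exacts [h.mutate k, h.submatrix σ]

theorem isMutationCyclic {B : Matrix (Fin 3) (Fin 3) ℝ} (h : IsBigCyclic B) :
    IsMutationCyclic B := by
  intro B' hB'
  suffices IsBigCyclic B' from this.isCyclicMat
  induction hB' with
  | refl => exact h
  | tail _ hstep ih => exact ih.mutationStep hstep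

end IsBigCyclic

theorem MutationStep.neg {B B' : Matrix (Fin 3) (Fin 3) ℝ} (h : MutationStep B B') :
    MutationStep (-B) (-B') := by
  rcases h with ⟨k, rfl⟩ | ⟨σ, rfl⟩
  · exact Or.inl ⟨k, (mutate_neg k B).symm⟩
  · exact Or.inr ⟨σ, rfl⟩

theorem MutationEquiv.neg {B B' : Matrix (Fin 3) (Fin 3) ℝ} (h : MutationEquiv B B') :
    MutationEquiv (-B) (-B') :=
  Relation.ReflTransGen.lift Neg.neg (fun _ _ => MutationStep.neg) _ _ h

theorem IsMutationAcyclic.neg {B : Matrix (Fin 3) (Fin 3) ℝ} (h : IsMutationAcyclic B) :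
    IsMutationAcyclic (-B) :=
  let ⟨B', hB', hacyc⟩ := h
  ⟨-B', hB'.neg, by rwa [isCyclicMat_neg]⟩

theorem IsMutationCyclic.not_isMutationAcyclic {B : Matrix (Fin 3) (Fin 3) ℝ}
    (h : IsMutationCyclic B) : ¬ IsMutationAcyclic B :=
  fun ⟨B', hB', hacyc⟩ => hacyc (h B' hB')

theorem acyclicWithin_of_pos {a b c : ℝ} (ha : 0 < a) (hb : 0 < b) (hc : 0 < c)
    (hac : IsMutationAcyclic (skew3 a b c)) (h4 : markov (skew3 a b c) < 4) :
    AcyclicWithin ⌊π / arcsin (√(4 - markov (skew3 a b c)) / 2)⌋₊ (skew3 a b c) := by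
  rw [markov_skew3_of_pos ha hb hc] at h4 ⊢
  have hsmall : a < 2 ∨ b < 2 ∨ c < 2 := by
    by_contra! hbig
    have hbig : IsBigCyclic (skew3 a b c) :=
      ⟨a, b, c, ⟨hbig.1, hbig.2.1, hbig.2.2, h4⟩, Or.inl rfl⟩
    exact hbig.isMutationCyclic.not_isMutationAcyclic hac
  rcases hsmall with h2 | h2 | h2
  · exact acyclicWithin_of_lt_two ha h2 hb hc rfl h4
  · exact (acyclicWithin_of_lt_two hb h2 hc ha (by ring) h4).of_skew3_rotate
  · exact (acyclicWithin_of_lt_two hc h2 ha hb (by ring) h4).of_skew3_rotate.of_skew3_rotate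

theorem acyclic_within_bounded_mutations_general
    (B : Matrix (Fin 3) (Fin 3) ℝ) (hB : Bᵀ = -B)
    (hac : IsMutationAcyclic B) (h4 : markov B < 4) :
    ∃ ks : List (Fin 3),
      ks.length ≤ ⌊Real.pi / Real.arcsin (Real.sqrt (4 - markov B) / 2)⌋₊ ∧
      ¬ IsCyclicMat (ks.foldl (fun M k => mutate k M) B) := by
  by_cases hcyc : IsCyclicMat B
  swap
  · exact ⟨[], Nat.zero_le _, hcyc⟩
  change AcyclicWithin _ B
  obtain ⟨a, b, c, rfl⟩ : ∃ a b c, B = skew3 a b c := ⟨_, _, _, eq_skew3_of_transpose_eq_neg hB⟩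
  rcases (isCyclicMat_skew3 a b c).1 hcyc with ⟨ha, hb, hc⟩ | ⟨ha, hb, hc⟩
  · exact acyclicWithin_of_pos ha hb hc hac h4
  · have h := acyclicWithin_of_pos (neg_pos.2 ha) (neg_pos.2 hb) (neg_pos.2 hc)
      (by rw [← neg_skew3]; exact hac.neg) (by rwa [← neg_skew3, markov_neg])
    rw [← neg_skew3, markov_neg] at h
    exact h.of_neg

/-- a mutation-acyclic matrix with `0 < C(B) < 4` can be turned into
an acyclic one in at most `⌊π / arcsin(√(4 - C(B))/2)⌋` mutations. -/
theorem acyclic_within_bounded_mutations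
    (B : Matrix (Fin 3) (Fin 3) ℝ) (hB : Bᵀ = -B)
    (hac : IsMutationAcyclic B) (h0 : 0 < markov B) (h4 : markov B < 4) :
    ∃ ks : List (Fin 3),
      ks.length ≤ ⌊Real.pi / Real.arcsin (Real.sqrt (4 - markov B) / 2)⌋₊ ∧
      ¬ IsCyclicMat (ks.foldl (fun M k => mutate k M) B) :=
  acyclic_within_bounded_mutations_general B hB hac h4
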